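/- arXiv:2110.02754 — 2 statements merged into one kernel-verified Lean document; each statement's English description precedes it below -/
import Mathlib

section
/- (Inverse QFT) If f ∈ L¹(ℝ², ℍ) and F[f] ∈ L¹(ℝ², ℍ), then for a.e. x, f(x₁, x₂) = (2π)^{-2} ∫_{ℝ²} e^{i w₁ x₁} F[f](w₁, w₂) e^{j w₂ x₂} dw. -/
open MeasureTheory Real

noncomputable section

/-- The quaternion imaginary unit i. -/
def qi : Quaternion ℝ := ⟨0, 1, 0, 0⟩
/-- The quaternion imaginary unit j. -/
def qj : Quaternion ℝ := ⟨0, 0, 1, 0⟩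
/-- The quaternion imaginary unit k. -/
def qk : Quaternion ℝ := ⟨0, 0, 0, 1⟩

/-- e^{iθ} = cos θ + i sin θ as a quaternion. -/
def eI (θ : ℝ) : Quaternion ℝ := ⟨Real.cos θ, Real.sin θ, 0, 0⟩
/-- e^{jθ} = cos θ + j sin θ as a quaternion. -/
def eJ (θ : ℝ) : Quaternion ℝ := ⟨Real.cos θ, 0, Real.sin θ, 0⟩

/-- The two-sided quaternion Fourier transform. -/
def QFT (f : ℝ × ℝ → Quaternion ℝ) (w : ℝ × ℝ) : Quaternion ℝ :=
  ∫ x : ℝ × ℝ, eI (-(w.1 * x.1)) * f x * eJ (-(w.2 * x.2))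

/-- Parameters of an offset linear canonical transform. -/
structure OLCTParams where
  a : ℝ
  b : ℝ
  c : ℝ
  d : ℝ
  p : ℝ
  q : ℝ
  hb : b ≠ 0
  hdet : a * d - b * c = 1

/-- The QOLCT kernel K_{A}^{i}(x,w); the factor (2πbi)^{-1/2} is
(2π|b|)^{-1/2} e^{-iπ/4}, a quaternion of norm (2π|b|)^{-1/2}. -/
def KI (P : OLCTParams) (x w : ℝ) : Quaternion ℝ :=
  (Real.sqrt (2 * π * |P.b|))⁻¹ •
    (eI (-(π/4)) *
      eI ((1/(2*P.b)) * (P.a*x^2 - 2*x*(w-P.p) - 2*w*(P.d*P.p - P.b*P.q) + P.d*(w^2+P.p^2))))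

/-- The QOLCT kernel K_{A}^{j}(x,w). -/
def KJ (P : OLCTParams) (x w : ℝ) : Quaternion ℝ :=
  (Real.sqrt (2 * π * |P.b|))⁻¹ •
    (eJ (-(π/4)) *
      eJ ((1/(2*P.b)) * (P.a*x^2 - 2*x*(w-P.p) - 2*w*(P.d*P.p - P.b*P.q) + P.d*(w^2+P.p^2))))

/-- The two-sided short-time quaternion offset linear canonical transform. -/
def STQOLCT (P1 P2 : OLCTParams) (φ f : ℝ × ℝ → Quaternion ℝ) (w u : ℝ × ℝ) : Quaternion ℝ :=
  ∫ x : ℝ × ℝ, KI P1 x.1 w.1 * (f x * star (φ (x - u))) * KJ P2 x.2 w.2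

/-- Euclidean norm on ℝ². -/
def nrm (x : ℝ × ℝ) : ℝ := Real.sqrt (x.1^2 + x.2^2)

/-!
The real-linear maps `toComplexAdd, toComplexSub : ℍ → ℂ` are jointly injective and scalarise the
two-sided kernel: they send `eI θ * q * eJ φ` to `e^{i(θ + φ)}`, resp. `e^{i(θ - φ)}`, times the
image of `q`. Hence the two complex components of `QFT f` are ordinary Fourier transforms on `ℝ²`
of the components of `f`, the second one taken at the reflected frequency `(w₁, -w₂)`, and the
theorem reduces componentwise to almost-everywhere Fourier inversion for integrable functions with
integrable transform. On a finite-dimensional inner product space both sides of that inversion are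
locally integrable, and against a smooth compactly supported test function `φ` they agree by two
uses of the multiplication formula `∫ 𝓕 u • g = ∫ u • 𝓕 g` and inversion for the Schwartz
function `φ`. Mathlib's `𝓕` uses the kernel `e^{-2πi⟨x, ξ⟩}` on `WithLp 2 (ℝ × ℝ)`; the
passage to angular frequencies is where the factor `(2π)⁻²` comes from.
-/

open Complex FourierTransform WithLp
open scoped RealInnerProductSpace

section AEFourierInversion

variable {V E : Type*} [NormedAddCommGroup V] [InnerProductSpace ℝ V] [MeasurableSpace V]
  [BorelSpace V] [FiniteDimensional ℝ V] [NormedAddCommGroup E] [NormedSpace ℂ E]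
  [CompleteSpace E]

theorem Real.integral_fourier_smul_eq {u : V → ℂ} {g : V → E} (hu : Integrable u)
    (hg : Integrable g) : ∫ ξ, 𝓕 u ξ • g ξ = ∫ x, u x • 𝓕 g x := by
  have h := VectorFourier.integral_fourierIntegral_smul_eq_flip (L := innerₗ V)
    Real.continuous_fourierChar continuous_inner hu hg
  rwa [flip_innerₗ] at h

theorem Real.integral_fourierInv_smul_eq {u : V → ℂ} {g : V → E} (hu : Integrable u)
    (hg : Integrable g) : ∫ ξ, 𝓕⁻ u ξ • g ξ = ∫ x, u x • 𝓕⁻ g x := by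
  have h := VectorFourier.integral_fourierIntegral_smul_eq_flip (L := -innerₗ V)
    Real.continuous_fourierChar continuous_inner.neg hu hg
  rwa [show (-innerₗ V).flip = -innerₗ V by ext; simp [real_inner_comm]] at h

theorem MeasureTheory.Integrable.fourierInv_fourier_ae_eq {f : V → E} (hf : Integrable f)
    (h'f : Integrable (𝓕 f)) : 𝓕⁻ (𝓕 f) =ᵐ[volume] f := by
  have hcont : Continuous (𝓕⁻ (𝓕 f)) :=
    VectorFourier.fourierIntegral_continuous Real.continuous_fourierChar continuous_inner.neg h'f
  refine ae_eq_of_integral_contDiff_smul_eq hcont.locallyIntegrable hf.locallyIntegrable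
    fun φ hφ hφc => ?_
  let ψ : SchwartzMap V ℂ :=
    (hφc.comp_left ofReal_zero).toSchwartzMap (ofRealCLM.contDiff.comp hφ)
  have hψ (g : V → E) : ∫ x, φ x • g x = ∫ x, ψ x • g x :=
    integral_congr_ae (.of_forall fun x => (coe_smul (φ x) (g x)).symm)
  calc ∫ x, φ x • 𝓕⁻ (𝓕 f) x = ∫ x, ψ x • 𝓕⁻ (𝓕 f) x := hψ _
    _ = ∫ ξ, 𝓕⁻ ψ ξ • 𝓕 f ξ := by
      rw [SchwartzMap.fourierInv_coe, Real.integral_fourierInv_smul_eq ψ.integrable h'f]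
    _ = ∫ x, 𝓕 (𝓕⁻ ψ) x • f x := (Real.integral_fourier_smul_eq (𝓕⁻ ψ).integrable hf).symm
    _ = ∫ x, φ x • f x := by rw [FourierTransform.fourier_fourierInv_eq, hψ]

end AEFourierInversion

section FourierR2

variable {E : Type*} [NormedAddCommGroup E] [NormedSpace ℂ E]

def fourierR2 (g : ℝ × ℝ → E) (w : ℝ × ℝ) : E :=
  ∫ x, cexp (-↑(w.1 * x.1 + w.2 * x.2) * I) • g x

def fourierInvR2 (G : ℝ × ℝ → E) (x : ℝ × ℝ) : E :=
  ∫ w, cexp (↑(w.1 * x.1 + w.2 * x.2) * I) • G w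

theorem fourier_comp_ofLp (g : ℝ × ℝ → E) (ξ : WithLp 2 (ℝ × ℝ)) :
    𝓕 (fun ξ : WithLp 2 (ℝ × ℝ) => g ξ.ofLp) ξ = fourierR2 g ((2 * π) • ofLp ξ) := by
  rw [Real.fourier_eq', fourierR2,
    ← (volume_preserving_ofLp ℝ ℝ).integral_comp
      (MeasurableEquiv.toLp 2 (ℝ × ℝ)).symm.measurableEmbedding]
  congr with v
  simp only [neg_mul, prod_inner_apply, ofLp_fst, RCLike.inner_apply, ringHom_apply, ofLp_snd,
    ofReal_neg, ofReal_mul, ofReal_ofNat, ofReal_add, Prod.smul_fst, smul_eq_mul, Prod.smul_snd]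
  ring_nf

theorem fourierInv_comp_smul_ofLp (G : ℝ × ℝ → E) (v : WithLp 2 (ℝ × ℝ)) :
    𝓕⁻ (fun ξ : WithLp 2 (ℝ × ℝ) => G ((2 * π) • ofLp ξ)) v =
      ((2 * π) ^ 2)⁻¹ • fourierInvR2 G (ofLp v) := by
  set F : ℝ × ℝ → E := fun w => cexp (↑(w.1 * v.ofLp.1 + w.2 * v.ofLp.2) * I) • G w
  calc 𝓕⁻ (fun ξ : WithLp 2 (ℝ × ℝ) => G ((2 * π) • ofLp ξ)) v
      = ∫ ξ : WithLp 2 (ℝ × ℝ), F ((2 * π) • ofLp ξ) := by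
        rw [Real.fourierInv_eq']
        congr with ξ
        simp only [F, prod_inner_apply, ofLp_fst, RCLike.inner_apply, ringHom_apply, ofLp_snd,
          ofReal_mul, ofReal_ofNat, ofReal_add, Prod.smul_fst, smul_eq_mul, Prod.smul_snd]
        ring_nf
    _ = ∫ y, F ((2 * π) • y) :=
        (volume_preserving_ofLp ℝ ℝ).integral_comp
          (MeasurableEquiv.toLp 2 (ℝ × ℝ)).symm.measurableEmbedding fun y => F ((2 * π) • y)
    _ = ((2 * π) ^ 2)⁻¹ • fourierInvR2 G (ofLp v) := by
        rw [Measure.integral_comp_smul, Module.finrank_prod, Module.finrank_self,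
          abs_of_pos (by positivity)]
        rfl

variable [CompleteSpace E]

theorem ae_eq_fourierInvR2_fourierR2 {g : ℝ × ℝ → E} (hg : Integrable g)
    (hFg : Integrable (fourierR2 g)) :
    ∀ᵐ x, g x = ((2 * π) ^ 2)⁻¹ • fourierInvR2 (fourierR2 g) x := by
  let G : WithLp 2 (ℝ × ℝ) → E := fun ξ => g ξ.ofLp
  have hmp := volume_preserving_ofLp ℝ ℝ
  have hFG : 𝓕 G = fun ξ => fourierR2 g ((2 * π) • ofLp ξ) := funext (fourier_comp_ofLp g)
  have hinv : 𝓕⁻ (𝓕 G) =ᵐ[volume] G :=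
    (hmp.integrable_comp_of_integrable hg).fourierInv_fourier_ae_eq
      (hFG ▸ hmp.integrable_comp_of_integrable (hFg.comp_smul (by positivity)))
  filter_upwards [(volume_preserving_toLp ℝ ℝ).quasiMeasurePreserving.ae hinv] with x hx
  rw [hFG, fourierInv_comp_smul_ofLp] at hx
  exact hx.symm

end FourierR2

theorem norm_eI (θ : ℝ) : ‖eI θ‖ = 1 := by
  rw [norm_eq_sqrt_real_inner, Quaternion.inner_self, Quaternion.normSq_def']
  simp [eI]

theorem norm_eJ (θ : ℝ) : ‖eJ θ‖ = 1 := by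
  rw [norm_eq_sqrt_real_inner, Quaternion.inner_self, Quaternion.normSq_def']
  simp [eJ]

theorem eI_eq_cos_add_sin_smul (θ : ℝ) :
    eI θ = (Real.cos θ : Quaternion ℝ) + Real.sin θ • qi := by
  ext <;> simp [eI] <;> simp [qi]

theorem eJ_eq_cos_add_sin_smul (θ : ℝ) :
    eJ θ = (Real.cos θ : Quaternion ℝ) + Real.sin θ • qj := by
  ext <;> simp [eJ] <;> simp [qj]

theorem continuous_eI : Continuous eI := by
  simp_rw [funext eI_eq_cos_add_sin_smul]
  exact (Quaternion.continuous_coe.comp continuous_cos).add (continuous_sin.smul continuous_const)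

theorem continuous_eJ : Continuous eJ := by
  simp_rw [funext eJ_eq_cos_add_sin_smul]
  exact (Quaternion.continuous_coe.comp continuous_cos).add (continuous_sin.smul continuous_const)

/- Writing `ℍ = ℂ_i ⊗_ℝ ℂ_j`, with `span {1, i}` acting on the left and `span {1, j}` on the right,
these are the two projections of `ℂ ⊗_ℝ ℂ ≅ ℂ × ℂ`. -/
def toComplexAdd : Quaternion ℝ →L[ℝ] ℂ :=
  LinearMap.toContinuousLinearMap
    { toFun q := ⟨q.re - q.imK, q.imI + q.imJ⟩
      map_add' a b := by apply Complex.ext <;> simp [add_sub_add_comm, add_add_add_comm]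
      map_smul' r a := by apply Complex.ext <;> simp [mul_sub, mul_add] }
def toComplexSub : Quaternion ℝ →L[ℝ] ℂ :=
  LinearMap.toContinuousLinearMap
    { toFun q := ⟨q.re + q.imK, q.imI - q.imJ⟩
      map_add' a b := by apply Complex.ext <;> simp [add_sub_add_comm, add_add_add_comm]
      map_smul' r a := by apply Complex.ext <;> simp [mul_sub, mul_add] }

theorem Quaternion.ext_toComplexAdd_toComplexSub {a b : Quaternion ℝ}
    (hadd : toComplexAdd a = toComplexAdd b) (hsub : toComplexSub a = toComplexSub b) : a = b := by
  have h₁ := congrArg Complex.re hadd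
  have h₂ := congrArg Complex.im hadd
  have h₃ := congrArg Complex.re hsub
  have h₄ := congrArg Complex.im hsub
  simp only [toComplexAdd, toComplexSub, LinearMap.coe_toContinuousLinearMap', LinearMap.coe_mk,
    AddHom.coe_mk] at h₁ h₂ h₃ h₄
  ext <;> linarith

theorem toComplexAdd_eI_mul_mul_eJ (θ φ : ℝ) (q : Quaternion ℝ) :
    toComplexAdd (eI θ * q * eJ φ) = cexp (↑(θ + φ) * I) * toComplexAdd q := by
  apply Complex.ext <;>
    simp only [mul_re, mul_im, exp_ofReal_mul_I_re, exp_ofReal_mul_I_im, Real.cos_add,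
      Real.sin_add] <;>
    simp only [toComplexAdd, LinearMap.coe_toContinuousLinearMap', LinearMap.coe_mk,
      AddHom.coe_mk, Quaternion.re_mul, Quaternion.imI_mul, Quaternion.imJ_mul,
      Quaternion.imK_mul] <;> simp only [eI, eJ] <;> ring

theorem toComplexSub_eI_mul_mul_eJ (θ φ : ℝ) (q : Quaternion ℝ) :
    toComplexSub (eI θ * q * eJ φ) = cexp (↑(θ - φ) * I) * toComplexSub q := by
  apply Complex.ext <;>
    simp only [mul_re, mul_im, exp_ofReal_mul_I_re, exp_ofReal_mul_I_im, Real.cos_sub,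
      Real.sin_sub] <;>
    simp only [toComplexSub, LinearMap.coe_toContinuousLinearMap', LinearMap.coe_mk,
      AddHom.coe_mk, Quaternion.re_mul, Quaternion.imI_mul, Quaternion.imJ_mul,
      Quaternion.imK_mul] <;> simp only [eI, eJ] <;> ring

section Sandwich

variable {X : Type*} [MeasurableSpace X] {μ : Measure X} {h : X → Quaternion ℝ} {a b : X → ℝ}

theorem MeasureTheory.Integrable.eI_mul_mul_eJ (hh : Integrable h μ) (ha : Measurable a)
    (hb : Measurable b) :
    Integrable (fun x => eI (a x) * h x * eJ (b x)) μ := by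
  refine hh.norm.mono' ?_ (.of_forall fun x => ?_)
  · exact ((continuous_eI.comp_aestronglyMeasurable ha.aestronglyMeasurable).mul hh.1).mul
      (continuous_eJ.comp_aestronglyMeasurable hb.aestronglyMeasurable)
  · simp [norm_eI, norm_eJ]

theorem toComplexAdd_integral_eI_mul_mul_eJ (hh : Integrable h μ) (ha : Measurable a)
    (hb : Measurable b) :
    toComplexAdd (∫ x, eI (a x) * h x * eJ (b x) ∂μ) =
      ∫ x, cexp (↑(a x + b x) * I) • toComplexAdd (h x) ∂μ := by
  rw [← toComplexAdd.integral_comp_comm (hh.eI_mul_mul_eJ ha hb)]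
  simp_rw [toComplexAdd_eI_mul_mul_eJ, smul_eq_mul]

theorem toComplexSub_integral_eI_mul_mul_eJ (hh : Integrable h μ) (ha : Measurable a)
    (hb : Measurable b) :
    toComplexSub (∫ x, eI (a x) * h x * eJ (b x) ∂μ) =
      ∫ x, cexp (↑(a x - b x) * I) • toComplexSub (h x) ∂μ := by
  rw [← toComplexSub.integral_comp_comm (hh.eI_mul_mul_eJ ha hb)]
  simp_rw [toComplexSub_eI_mul_mul_eJ, smul_eq_mul]

end Sandwich

def negSnd : ℝ × ℝ ≃ᵐ ℝ × ℝ := (MeasurableEquiv.refl ℝ).prodCongr (MeasurableEquiv.neg ℝ)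

theorem negSnd_apply (w : ℝ × ℝ) : negSnd w = (w.1, -w.2) := rfl

theorem measurePreserving_negSnd : MeasurePreserving negSnd := by
  rw [Measure.volume_eq_prod]
  exact (MeasurePreserving.id volume).prod (Measure.measurePreserving_neg volume)

section QFT

variable {f : ℝ × ℝ → Quaternion ℝ}

theorem toComplexAdd_comp_QFT (hf : Integrable f) :
    toComplexAdd ∘ QFT f = fourierR2 (toComplexAdd ∘ f) := by
  ext1 w
  rw [Function.comp_apply, QFT, toComplexAdd_integral_eI_mul_mul_eJ hf (by fun_prop) (by fun_prop)]
  congr with x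
  congr 3
  push_cast
  ring

theorem fourierR2_toComplexSub_comp (hf : Integrable f) :
    fourierR2 (toComplexSub ∘ f) = fun w => toComplexSub (QFT f (negSnd w)) := by
  ext1 w
  rw [QFT, toComplexSub_integral_eI_mul_mul_eJ hf (by fun_prop) (by fun_prop)]
  refine integral_congr_ae (.of_forall fun x => ?_)
  simp only [negSnd_apply, Function.comp_apply]
  congr 3
  push_cast
  ring

theorem toComplexAdd_integral_eq_fourierInvR2 {Q : ℝ × ℝ → Quaternion ℝ} (hQ : Integrable Q)
    (x : ℝ × ℝ) :
    toComplexAdd (∫ w, eI (w.1 * x.1) * Q w * eJ (w.2 * x.2)) =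
      fourierInvR2 (toComplexAdd ∘ Q) x :=
  toComplexAdd_integral_eI_mul_mul_eJ hQ (by fun_prop) (by fun_prop)

theorem toComplexSub_integral_eq_fourierInvR2 {Q : ℝ × ℝ → Quaternion ℝ} (hQ : Integrable Q)
    (x : ℝ × ℝ) :
    toComplexSub (∫ w, eI (w.1 * x.1) * Q w * eJ (w.2 * x.2)) =
      fourierInvR2 (fun w => toComplexSub (Q (negSnd w))) x := by
  rw [toComplexSub_integral_eI_mul_mul_eJ hQ (by fun_prop) (by fun_prop), fourierInvR2,
    ← measurePreserving_negSnd.integral_comp'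
      fun w => cexp (↑(w.1 * x.1 - w.2 * x.2) * I) • toComplexSub (Q w)]
  refine integral_congr_ae (.of_forall fun w => ?_)
  simp only [negSnd_apply]
  congr 3
  push_cast
  ring

end QFT

theorem QFT_inversion (f : ℝ × ℝ → Quaternion ℝ)
    (hf : Integrable f volume) (hFf : Integrable (QFT f) volume) :
    ∀ᵐ x : ℝ × ℝ, f x =
      ((2 * π)^2)⁻¹ • ∫ w : ℝ × ℝ, eI (w.1 * x.1) * QFT f w * eJ (w.2 * x.2) := by
  have hadd := ae_eq_fourierInvR2_fourierR2 (toComplexAdd.integrable_comp hf)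
    (toComplexAdd_comp_QFT hf ▸ toComplexAdd.integrable_comp hFf)
  have hsub := ae_eq_fourierInvR2_fourierR2 (toComplexSub.integrable_comp hf)
    (fourierR2_toComplexSub_comp hf ▸
      measurePreserving_negSnd.integrable_comp_of_integrable (toComplexSub.integrable_comp hFf))
  filter_upwards [hadd, hsub] with x hx_add hx_sub
  refine Quaternion.ext_toComplexAdd_toComplexSub ?_ ?_
  · rw [map_smul, toComplexAdd_integral_eq_fourierInvR2 hFf, toComplexAdd_comp_QFT hf]
    exact hx_add
  · rw [map_smul, toComplexSub_integral_eq_fourierInvR2 hFf, ← fourierR2_toComplexSub_comp hf]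
    exact hx_sub
end
end

section
/- (Relation of ST-QOLCT to QFT) For f, φ ∈ L²(ℝ², ℍ), the ST-QOLCT factors as S_φ[f](w, u) = (2π i b₁)^{-1/2} e^{i[-(w₁/b₁)(d₁p₁ - b₁q₁) + (d₁/(2b₁))(w₁² + p₁²)]} · F[h(·, u)](w₁/b₁, w₂/b₂) · (2π j b₂)^{-1/2} e^{j[-(w₂/b₂)(d₂p₂ - b₂q₂) + (d₂/(2b₂))(w₂² + p₂²)]}, where h(x, u) = e^{i[(a₁/(2b₁))x₁² + (1/b₁)x₁p₁]} f(x) conj(φ(x-u)) e^{j[(a₂/(2b₂))x₂² + (1/b₂)x₂p₂]} and F is the two-sided QFT. -/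
open MeasureTheory Real

noncomputable section

/-! Both kernels are chirps in `x` and `w`; completing the phase, each splits into a factor
depending only on `w`, the QFT character `e^{-i (w/b) x}` and a chirp depending only on `x`.
The constant factors sit on the outer sides of the integrand, so they can be pulled out of the
integral in spite of the noncommutativity of ℍ. -/

lemma eI_add (a b : ℝ) : eI (a + b) = eI a * eI b := by
  ext <;>
    simp only [Quaternion.re_mul, Quaternion.imI_mul, Quaternion.imJ_mul, Quaternion.imK_mul] <;>
    simp [eI, Real.cos_add, Real.sin_add, add_comm]

lemma eJ_add (a b : ℝ) : eJ (a + b) = eJ a * eJ b := by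
  ext <;>
    simp only [Quaternion.re_mul, Quaternion.imI_mul, Quaternion.imJ_mul, Quaternion.imK_mul] <;>
    simp [eJ, Real.cos_add, Real.sin_add, add_comm]

section DivisionRing

variable {α 𝕜 : Type*} [MeasurableSpace α] {μ : Measure α}
  [NormedDivisionRing 𝕜] [NormedAlgebra ℝ 𝕜]

theorem integral_mul_const_of_divisionRing (g : α → 𝕜) (d : 𝕜) :
    ∫ x, g x * d ∂μ = (∫ x, g x ∂μ) * d := by
  rcases eq_or_ne d 0 with rfl | hd
  · simp
  by_cases hg : Integrable g μ
  · exact integral_mul_const_of_integrable hg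
  · have hgd : ¬ Integrable (fun x => g x * d) μ :=
      (integrable_mul_const_iff (IsUnit.mk0 d hd) g).not.mpr hg
    rw [integral_undef hg, integral_undef hgd, zero_mul]

theorem integral_const_mul_mul_const (c : 𝕜) (g : α → 𝕜) (d : 𝕜) :
    ∫ x, c * g x * d ∂μ = c * (∫ x, g x ∂μ) * d := by
  rw [integral_mul_const_of_divisionRing, ← smul_eq_mul c, ← integral_smul]
  rfl

end DivisionRing

lemma KI_eq_mul (P : OLCTParams) (x w : ℝ) :
    KI P x w =
      ((Real.sqrt (2 * π * |P.b|))⁻¹ •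
          (eI (-(π/4)) *
            eI (-(w/P.b) * (P.d*P.p - P.b*P.q) + (P.d/(2*P.b)) * (w^2 + P.p^2)))) *
        (eI (-(w/P.b * x)) * eI ((P.a/(2*P.b))*x^2 + (1/P.b)*x*P.p)) := by
  have hb := P.hb
  simp only [KI, smul_mul_assoc, mul_assoc, ← eI_add]
  congr 2
  field_simp
  ring

lemma KJ_eq_mul (P : OLCTParams) (x w : ℝ) :
    KJ P x w =
      (eJ ((P.a/(2*P.b))*x^2 + (1/P.b)*x*P.p) * eJ (-(w/P.b * x))) *
        ((Real.sqrt (2 * π * |P.b|))⁻¹ •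
          (eJ (-(π/4)) *
            eJ (-(w/P.b) * (P.d*P.p - P.b*P.q) + (P.d/(2*P.b)) * (w^2 + P.p^2)))) := by
  have hb := P.hb
  simp only [KJ, mul_smul_comm, mul_assoc, ← eJ_add]
  congr 2
  field_simp
  ring

theorem STQOLCT_eq_QFT_general (P1 P2 : OLCTParams) (φ f : ℝ × ℝ → Quaternion ℝ)
    (w u : ℝ × ℝ) :
    STQOLCT P1 P2 φ f w u =
      ((Real.sqrt (2 * π * |P1.b|))⁻¹ •
          (eI (-(π/4)) *
            eI (-(w.1/P1.b) * (P1.d*P1.p - P1.b*P1.q) + (P1.d/(2*P1.b)) * (w.1^2 + P1.p^2)))) *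
        QFT (fun x => eI ((P1.a/(2*P1.b))*x.1^2 + (1/P1.b)*x.1*P1.p) *
              (f x * star (φ (x - u))) *
              eJ ((P2.a/(2*P2.b))*x.2^2 + (1/P2.b)*x.2*P2.p))
          (w.1/P1.b, w.2/P2.b) *
        ((Real.sqrt (2 * π * |P2.b|))⁻¹ •
          (eJ (-(π/4)) *
            eJ (-(w.2/P2.b) * (P2.d*P2.p - P2.b*P2.q) + (P2.d/(2*P2.b)) * (w.2^2 + P2.p^2)))) := by
  simp only [STQOLCT, QFT, ← integral_const_mul_mul_const]
  congr 1
  funext x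
  rw [KI_eq_mul, KJ_eq_mul]
  simp only [mul_assoc]

theorem STQOLCT_eq_QFT (P1 P2 : OLCTParams) (φ f : ℝ × ℝ → Quaternion ℝ)
    (hf : MemLp f 2 volume) (hφ : MemLp φ 2 volume) (w u : ℝ × ℝ) :
    STQOLCT P1 P2 φ f w u =
      ((Real.sqrt (2 * π * |P1.b|))⁻¹ •
          (eI (-(π/4)) *
            eI (-(w.1/P1.b) * (P1.d*P1.p - P1.b*P1.q) + (P1.d/(2*P1.b)) * (w.1^2 + P1.p^2)))) *
        QFT (fun x => eI ((P1.a/(2*P1.b))*x.1^2 + (1/P1.b)*x.1*P1.p) *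
              (f x * star (φ (x - u))) *
              eJ ((P2.a/(2*P2.b))*x.2^2 + (1/P2.b)*x.2*P2.p))
          (w.1/P1.b, w.2/P2.b) *
        ((Real.sqrt (2 * π * |P2.b|))⁻¹ •
          (eJ (-(π/4)) *
            eJ (-(w.2/P2.b) * (P2.d*P2.p - P2.b*P2.q) + (P2.d/(2*P2.b)) * (w.2^2 + P2.p^2)))) :=
  STQOLCT_eq_QFT_general P1 P2 φ f w u
end
end
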